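/- arXiv:1504.06396 — 2 statements merged into one kernel-verified Lean document; each statement's English description precedes it below -/
import Mathlib

section
/- The characteristic polynomial of the Hadamard walk evolution operator U_N on the cycle C_N factors as det(λ I_{2N} − U_N) = ∏_{k=0}^{N-1} (λ² + i√2 sin(2πk/N) λ − 1). -/
open Polynomial Matrix

/-- Top-row half of the Hadamard matrix. -/
noncomputable def Pmat : Matrix (Fin 2) (Fin 2) ℂ :=
  ((Real.sqrt 2 : ℝ) : ℂ)⁻¹ • !![1, 1; 0, 0]

/-- Bottom-row half of the Hadamard matrix. -/
noncomputable def Qmat : Matrix (Fin 2) (Fin 2) ℂ :=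
  ((Real.sqrt 2 : ℝ) : ℂ)⁻¹ • !![0, 0; 1, -1]

/-- Auxiliary matrix R. -/
noncomputable def Rmat : Matrix (Fin 2) (Fin 2) ℂ :=
  ((Real.sqrt 2 : ℝ) : ℂ)⁻¹ • !![1, -1; 0, 0]

/-- Auxiliary matrix S. -/
noncomputable def Smat : Matrix (Fin 2) (Fin 2) ℂ :=
  ((Real.sqrt 2 : ℝ) : ℂ)⁻¹ • !![0, 0; 1, 1]

/-- The 2N×2N evolution operator of the Hadamard walk on the cycle C_N:
block (k, k+1 mod N) is P, block (k, k-1 mod N) is Q (their sum if these coincide). -/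
noncomputable def hadU (N : ℕ) : Matrix (Fin N × Fin 2) (Fin N × Fin 2) ℂ :=
  fun ki lj =>
    (if (lj.1 : ℕ) = ((ki.1 : ℕ) + 1) % N then Pmat ki.2 lj.2 else 0) +
    (if ((lj.1 : ℕ) + 1) % N = (ki.1 : ℕ) then Qmat ki.2 lj.2 else 0)

/-- Adjacency matrix of the cycle C_N (with a double edge when N = 2),
counting left and right moves separately. -/
def adjC (N : ℕ) : Matrix (Fin N) (Fin N) ℤ :=
  fun k l =>
    (if (l : ℕ) = ((k : ℕ) + 1) % N then 1 else 0) +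
    (if ((l : ℕ) + 1) % N = (k : ℕ) then 1 else 0)

/-
The walk commutes with the rotation of the cycle, so the discrete Fourier transform diagonalises
the position part: writing `U_N = S ⊗ P + Sᵀ ⊗ Q` with `S` the cyclic shift, conjugation by
`V ⊗ 1`, where `V` is the Vandermonde matrix of the powers of `ω = e^{-2πi/N}`, turns `U_N` into
the block diagonal matrix with blocks `ω^k P + ω^{-k} Q`. Each block has determinant `-1` and
trace `(ω^k - ω^{-k})/√2 = -i√2 sin(2πk/N)`.
-/

open scoped Kronecker

theorem val_finRotate {N : ℕ} (k : Fin N) : (finRotate N k : ℕ) = (k + 1) % N := by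
  have := k.neZero
  rw [finRotate_apply, Fin.val_add, Fin.val_one', Nat.add_mod_mod]

namespace Matrix

variable {m n R : Type*} [Fintype m] [DecidableEq m] [Fintype n] [DecidableEq n] [CommRing R]

theorem charpoly_blockDiagonal (M : m → Matrix n n R) :
    (blockDiagonal M).charpoly = ∏ k, (M k).charpoly := by
  have : charmatrix (blockDiagonal M) = blockDiagonal fun k => charmatrix (M k) := by
    ext ⟨i, k⟩ ⟨j, l⟩
    by_cases h : k = l
    · subst h
      simp [charmatrix_apply, blockDiagonal_apply, diagonal_apply, Prod.ext_iff]
    · simp [blockDiagonal_apply, Prod.ext_iff, h]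
  rw [charpoly, this, det_blockDiagonal]
  rfl

theorem charpoly_diagonal_kronecker_add_diagonal_kronecker (a b : m → R) (A B : Matrix n n R) :
    (diagonal a ⊗ₖ A + diagonal b ⊗ₖ B).charpoly = ∏ k, (a k • A + b k • B).charpoly := by
  have : diagonal a ⊗ₖ A + diagonal b ⊗ₖ B = reindex (.prodComm _ _) (.prodComm _ _)
      (blockDiagonal fun k => a k • A + b k • B) := by
    ext ⟨i, k⟩ ⟨j, l⟩
    simp only [diagonal_kronecker, add_apply, reindex_apply, submatrix_apply, blockDiagonal_apply]
    split_ifs <;> simp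
  rw [this, charpoly_reindex, charpoly_blockDiagonal]

theorem charpoly_eq_of_mul_eq_mul {U D W : Matrix n n R} (hW : IsUnit W.det) (h : U * W = W * D) :
    U.charpoly = D.charpoly := by
  obtain ⟨W, rfl⟩ := (isUnit_iff_isUnit_det _).mpr hW
  rw [← charpoly_units_conj W D, ← h, mul_assoc, mul_nonsing_inv _ hW, mul_one]

variable {K : Type*} [Field K] {N : ℕ} {ω : K}

theorem permMatrix_finRotate_mul_vandermonde (hω : ω ^ N = 1) :
    (finRotate N).permMatrix K * vandermonde (fun k : Fin N => ω ^ (k : ℕ)) =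
      vandermonde (fun k : Fin N => ω ^ (k : ℕ)) * diagonal fun k : Fin N => ω ^ (k : ℕ) := by
  ext k l
  rw [PEquiv.toMatrix_toPEquiv_mul, submatrix_apply, mul_diagonal, vandermonde_apply,
    vandermonde_apply, id, val_finRotate, ← pow_eq_pow_mod _ hω, ← mul_pow, ← pow_succ]

theorem transpose_permMatrix_finRotate_mul_vandermonde [NeZero N] (hω : IsPrimitiveRoot ω N) :
    ((finRotate N).permMatrix K)ᵀ * vandermonde (fun k : Fin N => ω ^ (k : ℕ)) =
      vandermonde (fun k : Fin N => ω ^ (k : ℕ)) * diagonal fun k : Fin N => (ω ^ (k : ℕ))⁻¹ := by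
  have hω0 : ω ≠ 0 := hω.ne_zero (NeZero.ne N)
  have hdiag : (diagonal fun k : Fin N => ω ^ (k : ℕ)) *
      (diagonal fun k : Fin N => (ω ^ (k : ℕ))⁻¹) = 1 := by
    rw [diagonal_mul_diagonal, ← diagonal_one]
    exact congrArg diagonal (funext fun k => mul_inv_cancel₀ (pow_ne_zero _ hω0))
  have hperm : ((finRotate N).permMatrix K)ᵀ * (finRotate N).permMatrix K = 1 := by
    rw [transpose_permMatrix, ← permMatrix_mul, mul_inv_cancel, permMatrix_one]
  have hSV := permMatrix_finRotate_mul_vandermonde hω.pow_eq_one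
  generalize (finRotate N).permMatrix K = S at hSV hperm ⊢
  generalize vandermonde (fun k : Fin N => ω ^ (k : ℕ)) = V at hSV ⊢
  generalize (diagonal fun k : Fin N => ω ^ (k : ℕ)) = D at hSV hdiag
  generalize (diagonal fun k : Fin N => (ω ^ (k : ℕ))⁻¹) = D' at hdiag ⊢
  calc Sᵀ * V = Sᵀ * (V * D) * D' := by rw [mul_assoc, mul_assoc, hdiag, mul_one]
    _ = V * D' := by rw [← hSV, ← mul_assoc, hperm, one_mul]

theorem isUnit_det_vandermonde_pow (hω : IsPrimitiveRoot ω N) :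
    IsUnit (vandermonde fun k : Fin N => ω ^ (k : ℕ)).det :=
  (det_vandermonde_ne_zero_iff.mpr fun k l h => Fin.ext (hω.pow_inj k.isLt l.isLt h)).isUnit

theorem charpoly_permMatrix_finRotate_kronecker_add {n : Type*} [Fintype n] [DecidableEq n]
    [NeZero N] (hω : IsPrimitiveRoot ω N) (A B : Matrix n n K) :
    ((finRotate N).permMatrix K ⊗ₖ A + ((finRotate N).permMatrix K)ᵀ ⊗ₖ B).charpoly =
      ∏ k : Fin N, ((ω ^ (k : ℕ)) • A + (ω ^ (k : ℕ))⁻¹ • B).charpoly := by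
  rw [← charpoly_diagonal_kronecker_add_diagonal_kronecker]
  have hW : IsUnit ((vandermonde fun k : Fin N => ω ^ (k : ℕ)) ⊗ₖ (1 : Matrix n n K)).det := by
    rw [det_kronecker, det_one, one_pow, mul_one]
    exact (isUnit_det_vandermonde_pow hω).pow _
  refine charpoly_eq_of_mul_eq_mul hW ?_
  rw [add_mul, ← mul_kronecker_mul, ← mul_kronecker_mul, permMatrix_finRotate_mul_vandermonde
    hω.pow_eq_one, transpose_permMatrix_finRotate_mul_vandermonde hω, mul_add,
    ← mul_kronecker_mul, ← mul_kronecker_mul, mul_one, mul_one, one_mul, one_mul]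

end Matrix

theorem hadU_eq_kronecker (N : ℕ) :
    hadU N = (finRotate N).permMatrix ℂ ⊗ₖ Pmat + ((finRotate N).permMatrix ℂ)ᵀ ⊗ₖ Qmat := by
  ext ⟨k, i⟩ ⟨l, j⟩
  simp only [hadU, Matrix.add_apply, kroneckerMap_apply, transpose_apply,
    PEquiv.toMatrix_toPEquiv_apply, Pi.single_apply, Fin.ext_iff, val_finRotate, ite_mul,
    one_mul, zero_mul, eq_comm (a := (k : ℕ))]

theorem Complex.ofReal_sqrt_two_sq : ((Real.sqrt 2 : ℝ) : ℂ) ^ 2 = 2 := by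
  rw [← Complex.ofReal_pow, Real.sq_sqrt zero_le_two, Complex.ofReal_ofNat]

theorem charpoly_smul_Pmat_add_inv_smul_Qmat {z : ℂ} (hz : z ≠ 0) :
    (z • Pmat + z⁻¹ • Qmat).charpoly = X ^ 2 + C ((z⁻¹ - z) / ((Real.sqrt 2 : ℝ) : ℂ)) * X - 1 := by
  set s : ℂ := ((Real.sqrt 2 : ℝ) : ℂ)
  have hM : z • Pmat + z⁻¹ • Qmat = !![z / s, z / s; z⁻¹ / s, -z⁻¹ / s] := by
    ext i j
    fin_cases i <;> fin_cases j <;> simp [Pmat, Qmat, s, div_eq_mul_inv, mul_comm]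
  have htrace : z / s + -z⁻¹ / s = -((z⁻¹ - z) / s) := by ring
  have hs : s ^ 2 = 2 := Complex.ofReal_sqrt_two_sq
  have hdet : z / s * (-z⁻¹ / s) - z / s * (z⁻¹ / s) = -1 :=
    calc _ = -(2 * (z * z⁻¹) / s ^ 2) := by ring
      _ = -1 := by rw [mul_inv_cancel₀ hz, hs, mul_one, div_self two_ne_zero]
  rw [charpoly_fin_two, hM, trace_fin_two_of, det_fin_two_of, htrace, hdet, C_neg, C_neg, C_1,
    neg_mul, sub_neg_eq_add, ← sub_eq_add_neg]

theorem Complex.inv_exp_neg_mul_I_sub_exp_neg_mul_I (θ : ℂ) :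
    (Complex.exp (-(θ * Complex.I)))⁻¹ - Complex.exp (-(θ * Complex.I)) =
      2 * Complex.I * Complex.sin θ := by
  rw [← Complex.exp_neg, neg_neg, ← neg_mul, Complex.exp_mul_I, Complex.exp_mul_I,
    Complex.cos_neg, Complex.sin_neg]
  ring

theorem hadamard_walk_charpoly_general (N : ℕ) :
    (hadU N).charpoly =
      ∏ k : Fin N,
        (X ^ 2 +
          C (Complex.I * ((Real.sqrt 2 : ℝ) : ℂ) *
              ((Real.sin (2 * Real.pi * (k : ℕ) / N) : ℝ) : ℂ)) * X - 1) := by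
  rcases N.eq_zero_or_pos with rfl | hN
  · simp
  have : NeZero N := ⟨hN.ne'⟩
  have hω : IsPrimitiveRoot (Complex.exp (-(2 * Real.pi * Complex.I / N))) N := by
    rw [Complex.exp_neg]
    exact (Complex.isPrimitiveRoot_exp N hN.ne').inv
  rw [hadU_eq_kronecker, charpoly_permMatrix_finRotate_kronecker_add hω]
  refine Finset.prod_congr rfl fun k _ => ?_
  have hpow : Complex.exp (-(2 * Real.pi * Complex.I / N)) ^ (k : ℕ) =
      Complex.exp (-(((2 * Real.pi * (k : ℕ) / N : ℝ) : ℂ) * Complex.I)) := by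
    rw [← Complex.exp_nat_mul]
    push_cast
    ring_nf
  rw [hpow, charpoly_smul_Pmat_add_inv_smul_Qmat (Complex.exp_ne_zero _),
    Complex.inv_exp_neg_mul_I_sub_exp_neg_mul_I, ← Complex.ofReal_sin]
  congr 4
  rw [div_eq_iff (by simp)]
  linear_combination -(Complex.I * Real.sin (2 * Real.pi * (k : ℕ) / N)) * Complex.ofReal_sqrt_two_sq

theorem hadamard_walk_charpoly (N : ℕ) (hN : 3 ≤ N) :
    (hadU N).charpoly =
      ∏ k : Fin N,
        (X ^ 2 +
          C (Complex.I * ((Real.sqrt 2 : ℝ) : ℂ) *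
              ((Real.sin (2 * Real.pi * (k : ℕ) / N) : ℝ) : ℂ)) * X - 1) :=
  hadamard_walk_charpoly_general N
end

section
/- The period T_N of the Hadamard walk on the cycle C_N satisfies: T₂ = 2, T₄ = 8, T₈ = 24, and T_N = ∞ for all other N ≥ 2 (i.e., no power of U_N equals the identity when N ∉ {2,4,8}). -/
open Polynomial Matrix

/-!
Write `U_N = (1/√2) A_N` with `A_N` an integer matrix. Then `U_N ^ n = 1` forces `n = 2m` even
(the diagonal entries of `A_N ^ n` are integers equal to `√2 ^ n`) and `A_N ^ (2m) = 2^m • 1`;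
for `N = 2, 4, 8` this settles the periods by a finite computation.

For the other `N`, take a primitive `N`-th root of unity `ω`. The plane waves
`(k, i) ↦ ω^k u_i` are eigenvectors of `U_N`, with eigenvalues `λ` solving
`λ² = (ω - ω⁻¹) λ / √2 + 1`, hence `λ² + λ⁻² - 1 = (ω² + ω⁻²) / 2`. If `U_N` has finite period, `λ`
is a root of unity, so `cos(4π/N) = (ω² + ω⁻²) / 2` is an algebraic integer whose conjugates all
lie in `[-1, 1]`. By Kronecker's theorem it is `0` or a root of unity, i.e. `cos(4π/N) ∈ {0, ±1}`,
which means `N ∣ 8`.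
-/

open IntermediateField NumberField

lemma isIntegral_of_pow_eq_one {R A : Type*} [CommRing R] [CommRing A] [Algebra R A] {x : A}
    {n : ℕ} (hn : n ≠ 0) (hx : x ^ n = 1) : IsIntegral R x :=
  .of_pow (Nat.pos_of_ne_zero hn) (hx ▸ isIntegral_one)

lemma norm_half_add_inv_le_one {w : ℂ} (hw : ‖w‖ = 1) : ‖(w + w⁻¹) / 2‖ ≤ 1 :=
  calc ‖(w + w⁻¹) / 2‖ ≤ (‖w‖ + ‖w⁻¹‖) / 2 := by
        rw [norm_div, Complex.norm_two]; gcongr; exact norm_add_le _ _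
    _ = 1 := by rw [norm_inv, hw]; norm_num

theorem pow_four_eq_one_of_isIntegral_half_add_inv {ν : ℂ} {b : ℕ} (hb : b ≠ 0) (hν : ν ^ b = 1)
    (hint : IsIntegral ℤ ((ν + ν⁻¹) / 2)) : ν ^ 4 = 1 := by
  have hνnorm : ‖ν‖ = 1 := Complex.norm_eq_one_of_pow_eq_one hν hb
  have hν0 : ν ≠ 0 := norm_ne_zero_iff.mp (by rw [hνnorm]; exact one_ne_zero)
  let K := ℚ⟮ν⟯
  have : FiniteDimensional ℚ K := adjoin.finiteDimensional (isIntegral_of_pow_eq_one hb hν)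
  have : NumberField K := ⟨⟩
  let V : K := AdjoinSimple.gen ℚ ν
  let x : K := (V + V⁻¹) / 2
  have hx : algebraMap K ℂ x = (ν + ν⁻¹) / 2 := by simp [x, V]; norm_cast
  by_cases hx0 : x = 0
  · have hsum : ν + ν⁻¹ = 0 := by
      have := congrArg (algebraMap K ℂ) hx0
      rw [hx, map_zero] at this
      linear_combination 2 * this
    have hsq : ν ^ 2 = -1 := by field_simp at hsum; linear_combination hsum
    rw [show ν ^ 4 = (ν ^ 2) ^ 2 by ring, hsq]; norm_num
  have hconj (τ : K →+* ℂ) : ‖τ x‖ ≤ 1 := by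
    have hτ : ‖τ V‖ = 1 := Complex.norm_eq_one_of_pow_eq_one (by
      rw [← map_pow, show V ^ b = 1 from Subtype.ext hν, map_one]) hb
    rw [map_div₀, map_add, map_inv₀, map_ofNat]
    exact norm_half_add_inv_le_one hτ
  have hxint : IsIntegral ℤ x :=
    (isIntegral_algebraMap_iff (algebraMap K ℂ).injective).mp (hx ▸ hint)
  obtain ⟨k, hk, hxk⟩ := Embeddings.pow_eq_one_of_norm_le_one K ℂ hx0 hxint hconj
  have hsum : ‖ν + ν⁻¹‖ = ‖ν‖ + ‖ν⁻¹‖ := by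
    have h1 := Complex.norm_eq_one_of_pow_eq_one
      (by rw [← map_pow, hxk, map_one] : (algebraMap K ℂ x) ^ k = 1) hk.ne'
    rw [hx, norm_div, Complex.norm_two, div_eq_one_iff_eq two_ne_zero] at h1
    rw [h1, norm_inv, hνnorm]; norm_num
  have heq : ν = ν⁻¹ :=
    (sameRay_iff_norm_add.mpr hsum).eq_of_norm_eq (by rw [norm_inv, hνnorm]; norm_num)
  have hsq : ν ^ 2 = 1 := by rw [sq]; nth_rw 2 [heq]; exact mul_inv_cancel₀ hν0
  rw [show ν ^ 4 = (ν ^ 2) ^ 2 by ring, hsq, one_pow]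

lemma half_add_inv_sq_eq {K : Type*} [Field K] [NeZero (2 : K)] {c ω l : K} (hc : c ^ 2 = 2⁻¹)
    (hω : ω ≠ 0) (hl : l ^ 2 = c * (ω - ω⁻¹) * l + 1) :
    (ω ^ 2 + (ω ^ 2)⁻¹) / 2 = l ^ 2 + (l ^ 2)⁻¹ - 1 := by
  have hl0 : l ≠ 0 := by rintro rfl; simp at hl
  have hdiff : l - l⁻¹ = c * (ω - ω⁻¹) := mul_right_cancel₀ hl0 <| by
    rw [sub_mul, inv_mul_cancel₀ hl0]; linear_combination hl
  calc (ω ^ 2 + (ω ^ 2)⁻¹) / 2 = c ^ 2 * (ω - ω⁻¹) ^ 2 + 1 := by rw [hc]; field_simp; ring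
    _ = (l - l⁻¹) ^ 2 + 1 := by rw [hdiff]; ring
    _ = l ^ 2 + (l ^ 2)⁻¹ - 1 := by field_simp; ring

lemma pow_eq_one_of_mulVec_eq_smul {ι : Type*} [Fintype ι] [DecidableEq ι]
    {A : Matrix ι ι ℂ} {v : ι → ℂ} {l : ℂ} {n : ℕ} (hv : v ≠ 0) (hAv : A *ᵥ v = l • v)
    (hA : A ^ n = 1) : l ^ n = 1 := by
  have hpow (t : ℕ) : (A ^ t) *ᵥ v = l ^ t • v := by
    induction t with
    | zero => simp
    | succ t ih =>
      rw [pow_succ', ← Matrix.mulVec_mulVec, ih, Matrix.mulVec_smul, hAv, smul_smul, ← pow_succ]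
  have h' : (l ^ n - 1) • v = 0 := by
    rw [sub_smul, one_smul, ← hpow, hA, Matrix.one_mulVec, sub_self]
  exact sub_eq_zero.mp ((smul_eq_zero.mp h').resolve_right hv)

noncomputable def invSqrtTwo : ℂ := ((Real.sqrt 2 : ℝ) : ℂ)⁻¹

lemma invSqrtTwo_sq : invSqrtTwo ^ 2 = 2⁻¹ := by
  rw [invSqrtTwo, inv_pow, ← Complex.ofReal_pow, Real.sq_sqrt zero_le_two]; norm_num

lemma invSqrtTwo_ne_zero : invSqrtTwo ≠ 0 := by
  intro h; simpa [h] using invSqrtTwo_sq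

lemma Pmat_eq : Pmat = invSqrtTwo • !![1, 1; 0, 0] := rfl

lemma Qmat_eq : Qmat = invSqrtTwo • !![0, 0; 1, -1] := rfl

def hadUInt (N : ℕ) : Matrix (Fin N × Fin 2) (Fin N × Fin 2) ℤ :=
  fun ki lj =>
    (if (lj.1 : ℕ) = ((ki.1 : ℕ) + 1) % N then !![1, 1; 0, 0] ki.2 lj.2 else 0) +
    (if ((lj.1 : ℕ) + 1) % N = (ki.1 : ℕ) then !![0, 0; 1, -1] ki.2 lj.2 else 0)

lemma hadU_eq_smul_map (N : ℕ) : hadU N = invSqrtTwo • (hadUInt N).map (Int.cast : ℤ → ℂ) := by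
  ext ⟨k, i⟩ ⟨l, j⟩
  fin_cases i <;> fin_cases j <;>
    simp only [hadU, hadUInt, Pmat, Qmat, invSqrtTwo, Matrix.smul_apply, Matrix.map_apply,
      smul_eq_mul] <;>
    split_ifs <;> simp

lemma hadU_pow_eq_smul_map (N n : ℕ) :
    hadU N ^ n = invSqrtTwo ^ n • (hadUInt N ^ n).map (Int.cast : ℤ → ℂ) := by
  rw [hadU_eq_smul_map, _root_.smul_pow]
  exact congrArg _ (map_pow (Int.castRingHom ℂ).mapMatrix (hadUInt N) n).symm

lemma hadU_pow_two_mul_eq_one_iff (N m : ℕ) :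
    hadU N ^ (2 * m) = 1 ↔ hadUInt N ^ (2 * m) = (2 : ℤ) ^ m • 1 := by
  have hcast : (((2 : ℤ) ^ m • 1 : Matrix (Fin N × Fin 2) (Fin N × Fin 2) ℤ).map
      (Int.cast : ℤ → ℂ)) = (2 : ℂ) ^ m • 1 := by
    ext i j
    simp only [Matrix.map_apply, Matrix.smul_apply, Matrix.one_apply, smul_eq_mul]
    split_ifs <;> simp
  rw [hadU_pow_eq_smul_map, pow_mul, invSqrtTwo_sq, inv_pow,
    inv_smul_eq_iff₀ (pow_ne_zero _ two_ne_zero), ← hcast]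
  exact (Matrix.map_injective Int.cast_injective).eq_iff

lemma even_of_hadU_pow_eq_one {N n : ℕ} (hN : N ≠ 0) (h : hadU N ^ n = 1) : Even n := by
  have : NeZero N := ⟨hN⟩
  set a := (hadUInt N ^ n) (0, 0) (0, 0)
  have ha : invSqrtTwo ^ n * a = 1 := by
    simpa [hadU_pow_eq_smul_map] using congrFun (congrFun h (0, 0)) (0, 0)
  have ha' : Real.sqrt 2 ^ n = a := by
    have hsc : ((Real.sqrt 2 : ℝ) : ℂ) ^ n * invSqrtTwo ^ n = 1 := by
      rw [← mul_pow, invSqrtTwo, mul_inv_cancel₀ (by simp), one_pow]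
    apply Complex.ofReal_injective
    push_cast
    linear_combination (-((Real.sqrt 2 : ℝ) : ℂ) ^ n) * ha + a * hsc
  by_contra hodd
  obtain ⟨m, rfl⟩ := Nat.not_even_iff_odd.mp hodd
  have hirr : Irrational ((2 ^ m : ℚ) * Real.sqrt 2) :=
    irrational_sqrt_two.ratCast_mul (pow_ne_zero _ two_ne_zero)
  refine hirr.ne_int a ?_
  rw [← ha', pow_succ, pow_mul, Real.sq_sqrt zero_le_two]
  push_cast; ring

lemma isLeast_period_of_hadUInt {N m : ℕ} (hN : N ≠ 0) (hm : m ≠ 0)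
    (hpow : hadUInt N ^ (2 * m) = (2 : ℤ) ^ m • 1)
    (hmin : ∀ k, 1 ≤ k → k < m → hadUInt N ^ (2 * k) ≠ (2 : ℤ) ^ k • 1) :
    IsLeast {n : ℕ | 1 ≤ n ∧ hadU N ^ n = 1} (2 * m) := by
  refine ⟨⟨by omega, (hadU_pow_two_mul_eq_one_iff N m).mpr hpow⟩, ?_⟩
  rintro n ⟨hn, hU⟩
  obtain ⟨k, rfl⟩ := (even_of_hadU_pow_eq_one hN hU).two_dvd
  by_contra! hlt
  exact hmin k (by omega) (by omega) ((hadU_pow_two_mul_eq_one_iff N k).mp hU)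

lemma pow_val_add {N : ℕ} {ω : ℂ} (hω : ω ^ N = 1) (a b : Fin N) :
    ω ^ ((a + b : Fin N) : ℕ) = ω ^ (a : ℕ) * ω ^ (b : ℕ) := by
  rw [Fin.val_add, ← pow_eq_pow_mod _ hω, pow_add]

section PlaneWave

variable {N : ℕ} [NeZero N]

lemma pow_val_one {ω : ℂ} (hω : ω ^ N = 1) : ω ^ ((1 : Fin N) : ℕ) = ω := by
  rw [Fin.val_one', ← pow_eq_pow_mod _ hω, pow_one]

lemma hadU_apply (k l : Fin N) (i j : Fin 2) :
    hadU N (k, i) (l, j) =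
      (if l = k + 1 then Pmat i j else 0) + (if l = k - 1 then Qmat i j else 0) := by
  have hsucc (a : Fin N) : ((a + 1 : Fin N) : ℕ) = ((a : ℕ) + 1) % N := by
    rw [Fin.val_add, Fin.val_one', Nat.add_mod_mod]
  simp only [hadU, eq_sub_iff_add_eq, Fin.ext_iff, hsucc]

lemma hadU_mulVec_apply (v : Fin N × Fin 2 → ℂ) (k : Fin N) (i : Fin 2) :
    (hadU N *ᵥ v) (k, i) = ∑ j, Pmat i j * v (k + 1, j) + ∑ j, Qmat i j * v (k - 1, j) := by
  simp only [Matrix.mulVec, dotProduct, Fintype.sum_prod_type, hadU_apply, add_mul, ite_mul,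
    zero_mul, Finset.sum_add_distrib]
  rw [Finset.sum_comm, Finset.sum_comm (γ := Fin N)]
  simp

noncomputable def planeWave (ω l : ℂ) : Fin N × Fin 2 → ℂ :=
  fun p ↦ ω ^ (p.1 : ℕ) * ![ω * invSqrtTwo, l - ω * invSqrtTwo] p.2

lemma hadU_mulVec_planeWave {ω l : ℂ} (hω : ω ^ N = 1)
    (hl : l ^ 2 = invSqrtTwo * (ω - ω⁻¹) * l + 1) :
    hadU N *ᵥ planeWave ω l = l • planeWave ω l := by
  have hω0 : ω ≠ 0 := by rintro rfl; simp [NeZero.ne N] at hω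
  ext ⟨k, i⟩
  have hnext : ω ^ ((k + 1 : Fin N) : ℕ) = ω ^ (k : ℕ) * ω := by
    rw [pow_val_add hω, pow_val_one hω]
  have hprev : ω ^ ((k - 1 : Fin N) : ℕ) = ω ^ (k : ℕ) * ω⁻¹ := by
    have h := pow_val_add hω (k - 1) 1
    rw [sub_add_cancel, pow_val_one hω] at h
    exact (eq_mul_inv_iff_mul_eq₀ hω0).mpr h.symm
  rw [hadU_mulVec_apply]
  fin_cases i <;> simp [planeWave, Pmat_eq, Qmat_eq, hnext, hprev, Fin.sum_univ_two]
  · ring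
  · linear_combination (-ω ^ (k : ℕ)) * hl + (2 * ω ^ (k : ℕ) * ω * ω⁻¹) * invSqrtTwo_sq
      + ω ^ (k : ℕ) * mul_inv_cancel₀ hω0

end PlaneWave

lemma dvd_eight_of_hadU_pow_eq_one {N n : ℕ} (hN : N ≠ 0) (hn : n ≠ 0) (h : hadU N ^ n = 1) :
    N ∣ 8 := by
  have : NeZero N := ⟨hN⟩
  set ω := Complex.exp (2 * Real.pi * Complex.I / N)
  have hprim : IsPrimitiveRoot ω N := Complex.isPrimitiveRoot_exp N hN
  have hω0 : ω ≠ 0 := Complex.exp_ne_zero _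
  obtain ⟨l, hl⟩ : ∃ l : ℂ, l ^ 2 = invSqrtTwo * (ω - ω⁻¹) * l + 1 := by
    obtain ⟨l, hl⟩ := exists_quadratic_eq_zero one_ne_zero
      (b := -(invSqrtTwo * (ω - ω⁻¹))) (c := -1) (IsAlgClosed.exists_eq_mul_self _)
    exact ⟨l, by linear_combination hl⟩
  have hwave : planeWave (N := N) ω l ≠ 0 := fun h0 ↦ by
    simpa [planeWave, hω0, invSqrtTwo_ne_zero] using congrFun h0 (0, 0)
  have hln : l ^ n = 1 :=
    pow_eq_one_of_mulVec_eq_smul hwave (hadU_mulVec_planeWave hprim.pow_eq_one hl) h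
  have hl2 : (l ^ 2) ^ n = 1 := by rw [← pow_mul, mul_comm, pow_mul, hln, one_pow]
  have hint : IsIntegral ℤ ((ω ^ 2 + (ω ^ 2)⁻¹) / 2) := by
    rw [half_add_inv_sq_eq invSqrtTwo_sq hω0 hl]
    exact ((isIntegral_of_pow_eq_one hn hl2).add
      (isIntegral_of_pow_eq_one hn (by rw [inv_pow, hl2, inv_one]))).sub isIntegral_one
  have h8 := pow_four_eq_one_of_isIntegral_half_add_inv hN
    (by rw [← pow_mul, mul_comm, pow_mul, hprim.pow_eq_one, one_pow]) hint
  exact hprim.dvd_of_pow_eq_one 8 (by rw [← h8, ← pow_mul])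

theorem hadamard_walk_periods :
    IsLeast {n : ℕ | 1 ≤ n ∧ hadU 2 ^ n = 1} 2 ∧
    IsLeast {n : ℕ | 1 ≤ n ∧ hadU 4 ^ n = 1} 8 ∧
    IsLeast {n : ℕ | 1 ≤ n ∧ hadU 8 ^ n = 1} 24 ∧
    ∀ N : ℕ, 2 ≤ N → N ≠ 2 → N ≠ 4 → N ≠ 8 →
      ¬∃ n : ℕ, 1 ≤ n ∧ hadU N ^ n = 1 := by
  refine ⟨isLeast_period_of_hadUInt (m := 1) two_ne_zero one_ne_zero
      (by decide +kernel) (by decide +kernel),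
    isLeast_period_of_hadUInt (m := 4) four_ne_zero four_ne_zero
      (by decide +kernel) (by decide +kernel),
    isLeast_period_of_hadUInt (m := 12) (by norm_num) (by norm_num)
      (by decide +kernel) (by decide +kernel), ?_⟩
  rintro N hN h2 h4 h8 ⟨n, hn, hU⟩
  have hdvd := dvd_eight_of_hadU_pow_eq_one (by omega) (by omega) hU
  have hle : N ≤ 8 := Nat.le_of_dvd (by norm_num) hdvd
  interval_cases N <;> omega
end
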